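/- arXiv:2302.11323 — 2 statements merged into one kernel-verified Lean document; each statement's English description precedes it below -/
import Mathlib

section
/- For the linear EKI dynamics dθ⁽ʲ⁾/dt = -Σₖ ⟨Aθ⁽ᵏ⁾ - Aθ̄, Aθ⁽ʲ⁾ - y⟩ (θ⁽ᵏ⁾ - θ̄), each particle θ⁽ʲ⁾(t) remains in the affine span of the initial ensemble for all t ≥ 0 (subspace property). -/
open Matrix

/-- subspace property of linear EKI: each particle stays in the affine
span of the initial ensemble. -/
theorem stmt_8 (d m N : ℕ)
    (A : Matrix (Fin m) (Fin d) ℝ) (y : Fin m → ℝ)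
    (θ : Fin N → ℝ → (Fin d → ℝ))
    (θbar : ℝ → (Fin d → ℝ))
    (hbar : ∀ t, θbar t = (1 / (N : ℝ)) • ∑ j, θ j t)
    (hode : ∀ j t, 0 ≤ t →
      HasDerivAt (θ j)
        (-(∑ k, (((A *ᵥ θ k t) - A *ᵥ θbar t) ⬝ᵥ ((A *ᵥ θ j t) - y)) •
            (θ k t - θbar t))) t) :
    ∀ j t, 0 ≤ t →
      θ j t - θ j 0 ∈
        Submodule.span ℝ (Set.range fun k : Fin N => θ k 0 - θbar 0) := by
  intro j t ht
  have hN : 0 < N := j.pos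
  have hNR : (N : ℝ) ≠ 0 := Nat.cast_ne_zero.2 hN.ne'
  set c : Fin N → Fin N → ℝ → ℝ := fun j k s =>
    ((A *ᵥ θ k s) - A *ᵥ θbar s) ⬝ᵥ ((A *ᵥ θ j s) - y) with hc
  set V : Submodule ℝ (Fin d → ℝ) :=
    Submodule.span ℝ (Set.range fun k : Fin N => θ k 0 - θbar 0) with hVdef
  obtain ⟨W, hW⟩ := Submodule.exists_isCompl V
  let P : (Fin d → ℝ) →L[ℝ] W :=
    LinearMap.toContinuousLinearMap (W.projectionOnto V hW.symm)
  have hPzero : ∀ x : Fin d → ℝ, P x = 0 ↔ x ∈ V := by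
    intro x
    simp [P]
  have hP0 : ∀ k, P (θ k 0) = P (θbar 0) := by
    intro k
    have : P (θ k 0 - θbar 0) = 0 :=
      (hPzero _).2 (Submodule.subset_span ⟨k, rfl⟩)
    rwa [map_sub, sub_eq_zero] at this
  set h : ℝ → (Fin N → W) := fun s k => P (θ k s) - P (θ k 0) with hh
  suffices hsuff : h t = 0 by
    have : P (θ j t - θ j 0) = 0 := by
      have := congrFun hsuff j
      simpa [hh, map_sub] using this
    exact (hPzero _).1 this
  -- continuity of particles on [0, t]
  have hθcont : ∀ k, ContinuousOn (θ k) (Set.Icc 0 t) := by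
    intro k s hs
    exact ((hode k s hs.1).continuousAt).continuousWithinAt
  have hθbarcont : ContinuousOn θbar (Set.Icc 0 t) := by
    have : θbar = fun s => (1 / (N : ℝ)) • ∑ j, θ j s := funext hbar
    rw [this]
    exact (ContinuousOn.const_smul
      (continuousOn_finset_sum _ fun k _ => hθcont k) (1 / (N : ℝ))).congr fun s _ => rfl
  have hccont : ∀ k l, ContinuousOn (c k l) (Set.Icc 0 t) := by
    intro k l
    simp only [hc, dotProduct, Matrix.mulVec, Pi.sub_apply]
    apply continuousOn_finset_sum
    intro i _
    apply ContinuousOn.mul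
    · apply ContinuousOn.sub <;>
      · apply continuousOn_finset_sum
        intro x _
        exact ContinuousOn.mul continuousOn_const
          ((continuous_apply x).comp_continuousOn (by first
            | exact hθcont _ | exact hθbarcont))
    · apply ContinuousOn.sub _ continuousOn_const
      apply continuousOn_finset_sum
      intro x _
      exact ContinuousOn.mul continuousOn_const
        ((continuous_apply x).comp_continuousOn (hθcont _))
  -- bound on coefficients
  set Cfun : ℝ → ℝ := fun s => ∑ k, ∑ l, |c k l s| with hCfun
  have hCcont : ContinuousOn Cfun (Set.Icc 0 t) :=
    continuousOn_finset_sum _ fun k _ =>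
      continuousOn_finset_sum _ fun l _ => (hccont k l).abs
  obtain ⟨K, hK⟩ := isCompact_Icc.exists_bound_of_continuousOn hCcont
  have hK0 : 0 ≤ K := le_trans (norm_nonneg _) (hK 0 ⟨le_refl 0, ht⟩)
  have hCle : ∀ s ∈ Set.Icc (0:ℝ) t, ∀ k, ∑ l, |c k l s| ≤ K := by
    intro s hs k
    calc ∑ l, |c k l s| ≤ Cfun s := by
          refine Finset.single_le_sum (f := fun k => ∑ l, |c k l s|) ?_ (Finset.mem_univ k)
          intro i _
          exact Finset.sum_nonneg fun l _ => abs_nonneg _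
      _ ≤ |Cfun s| := le_abs_self _
      _ ≤ K := by simpa using hK s hs
  -- mean identity under projection
  have hmean : ∀ s, P (θbar s) = (1 / (N : ℝ)) • ∑ l, h s l + P (θbar 0) := by
    intro s
    rw [hbar s, ContinuousLinearMap.map_smul, map_sum]
    have : ∀ l : Fin N, P (θ l s) = h s l + P (θbar 0) := by
      intro l
      simp [hh, hP0 l]
    simp only [this]
    rw [Finset.sum_add_distrib, smul_add, Finset.sum_const, Finset.card_univ,
      Fintype.card_fin, ← Nat.cast_smul_eq_nsmul ℝ, smul_smul,
      one_div_mul_cancel hNR, one_smul]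
  have hdiff : ∀ s l, P (θ l s) - P (θbar s)
      = h s l - (1 / (N : ℝ)) • ∑ l', h s l' := by
    intro s l
    rw [hmean s]
    have : P (θ l s) = h s l + P (θbar 0) := by simp [hh, hP0 l]
    rw [this]
    abel
  -- derivative of h
  set D : ℝ → Fin N → W := fun s k =>
    -(∑ l, c k l s • (h s l - (1 / (N : ℝ)) • ∑ l', h s l')) with hD
  have hd : ∀ s ∈ Set.Ico (0:ℝ) t, HasDerivWithinAt h (D s) (Set.Ici s) s := by
    intro s hs
    apply HasDerivAt.hasDerivWithinAt
    rw [hasDerivAt_pi]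
    intro k
    have h1 : HasDerivAt (fun u => P (θ k u) - P (θ k 0))
        (P (-(∑ l, c k l s • (θ l s - θbar s)))) s :=
      (P.hasFDerivAt.comp_hasDerivAt s (hode k s hs.1)).sub_const _
    refine h1.congr_deriv ?_
    simp only [hD, map_neg, map_sum, ContinuousLinearMap.map_smul, map_sub, hdiff]
  -- continuity of h
  have hhcont : ContinuousOn h (Set.Icc 0 t) := by
    apply continuousOn_pi.2
    intro k
    exact (P.continuous.comp_continuousOn (hθcont k)).sub continuousOn_const
  -- norm bound on D
  have hbound : ∀ s ∈ Set.Ico (0:ℝ) t, ‖D s‖ ≤ (2 * K) * ‖h s‖ + 0 := by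
    intro s hs
    rw [add_zero]
    have hKh : 0 ≤ (2 * K) * ‖h s‖ :=
      mul_nonneg (by linarith) (norm_nonneg _)
    rw [pi_norm_le_iff_of_nonneg hKh]
    intro k
    have hterm : ∀ l : Fin N,
        ‖c k l s • (h s l - (1 / (N : ℝ)) • ∑ l', h s l')‖
          ≤ |c k l s| * (2 * ‖h s‖) := by
      intro l
      rw [norm_smul (c k l s) (h s l - (1 / (N : ℝ)) • ∑ l', h s l'),
        Real.norm_eq_abs]
      apply mul_le_mul_of_nonneg_left _ (abs_nonneg _)
      have h1 : ‖h s l‖ ≤ ‖h s‖ := norm_le_pi_norm (h s) l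
      have h2 : ‖(1 / (N : ℝ)) • ∑ l', h s l'‖ ≤ ‖h s‖ := by
        rw [norm_smul (1 / (N : ℝ)) (∑ l', h s l'), Real.norm_eq_abs]
        have hsum : ‖∑ l', h s l'‖ ≤ (N : ℝ) * ‖h s‖ := by
          calc ‖∑ l', h s l'‖ ≤ ∑ l' : Fin N, ‖h s l'‖ := norm_sum_le _ _
            _ ≤ ∑ _l' : Fin N, ‖h s‖ :=
              Finset.sum_le_sum fun l' _ => norm_le_pi_norm (h s) l'
            _ = (N : ℝ) * ‖h s‖ := by
              rw [Finset.sum_const, Finset.card_univ, Fintype.card_fin,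
                nsmul_eq_mul]
        calc |1 / (N : ℝ)| * ‖∑ l', h s l'‖
            ≤ (1 / (N : ℝ)) * ((N : ℝ) * ‖h s‖) := by
              apply mul_le_mul _ hsum (norm_nonneg _) _
              · rw [abs_of_nonneg]; positivity
              · positivity
          _ = ‖h s‖ := by field_simp
      calc ‖h s l - (1 / (N : ℝ)) • ∑ l', h s l'‖
          ≤ ‖h s l‖ + ‖(1 / (N : ℝ)) • ∑ l', h s l'‖ := norm_sub_le _ _
        _ ≤ 2 * ‖h s‖ := by linarith
    calc ‖D s k‖ = ‖∑ l, c k l s • (h s l - (1 / (N : ℝ)) • ∑ l', h s l')‖ := by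
          rw [hD]; exact norm_neg _
      _ ≤ ∑ l, ‖c k l s • (h s l - (1 / (N : ℝ)) • ∑ l', h s l')‖ :=
          norm_sum_le _ _
      _ ≤ ∑ l, |c k l s| * (2 * ‖h s‖) :=
          Finset.sum_le_sum fun l _ => hterm l
      _ = (∑ l, |c k l s|) * (2 * ‖h s‖) := by rw [Finset.sum_mul]
      _ ≤ K * (2 * ‖h s‖) := by
          apply mul_le_mul_of_nonneg_right
            (hCle s (Set.Ico_subset_Icc_self hs) k) (by positivity)
      _ = (2 * K) * ‖h s‖ := by ring
  have h0 : ‖h 0‖ ≤ 0 := by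
    have : h 0 = 0 := by funext k; simp [hh]
    simp [this]
  have hfinal := norm_le_gronwallBound_of_norm_deriv_right_le hhcont hd h0 hbound
    t ⟨ht, le_refl t⟩
  rw [sub_zero, gronwallBound_ε0_δ0] at hfinal
  exact norm_le_zero_iff.1 hfinal
end

section
/- For the empirical covariance Ĉ(t) = (1/N) Σⱼ e⁽ʲ⁾(t) e⁽ʲ⁾(t)ᵀ with centered particles evolving by de⁽ʲ⁾/dt = -(1/N) Σₖ E_{kj} e⁽ᵏ⁾, E_{kj} = ⟨Ãe⁽ᵏ⁾, Ãe⁽ʲ⁾⟩, the covariance satisfies dĈ/dt = -(2/N²) Σ_{j,k} E_{kj} e⁽ᵏ⁾ (e⁽ʲ⁾)ᵀ, and moreover dĈ/dt = -2 Ĉ ÃᵀÃ Ĉ. -/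
open Matrix

/-- dynamics of the empirical covariance:
dĈ/dt = -(2/N²) Σ_{j,k} E_{kj} e⁽ᵏ⁾(e⁽ʲ⁾)ᵀ = -2 Ĉ ÃᵀÃ Ĉ. -/
theorem stmt_10 (d m N : ℕ) (hN : 0 < N)
    (Atil : Matrix (Fin m) (Fin d) ℝ)
    (e : Fin N → ℝ → (Fin d → ℝ))
    (hode : ∀ j t,
      HasDerivAt (e j)
        (-((1 / (N : ℝ)) •
            ∑ k, ((Atil *ᵥ e k t) ⬝ᵥ (Atil *ᵥ e j t)) • e k t)) t) :
    let C : ℝ → Matrix (Fin d) (Fin d) ℝ :=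
      fun t => (1 / (N : ℝ)) • ∑ j, vecMulVec (e j t) (e j t)
    let D : ℝ → Matrix (Fin d) (Fin d) ℝ :=
      fun t => (-(2 / (N : ℝ) ^ 2)) •
        ∑ j, ∑ k, ((Atil *ᵥ e k t) ⬝ᵥ (Atil *ᵥ e j t)) • vecMulVec (e k t) (e j t)
    ∀ t, (∀ p q, HasDerivAt (fun s => C s p q) (D t p q) t) ∧
      D t = (-2 : ℝ) • (C t * (Atilᵀ * Atil) * C t) := by
  intro C D t
  set E : Fin N → Fin N → ℝ := fun j k => (Atil *ᵥ e k t) ⬝ᵥ (Atil *ᵥ e j t) with hE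
  have hEsymm : ∀ j k, E j k = E k j := fun j k => dotProduct_comm _ _
  constructor
  · intro p q
    have hd : ∀ j (i : Fin d), HasDerivAt (fun s => e j s i)
        (-(1 / (N : ℝ)) * ∑ k, E j k * e k t i) t := by
      intro j i
      have := hasDerivAt_pi.1 (hode j t) i
      refine this.congr_deriv (Eq.symm ?_)
      simp [hE, Finset.mul_sum]
    have h1 : HasDerivAt (fun s => ∑ j, e j s p * e j s q)
        (∑ j, ((-(1 / (N : ℝ)) * ∑ k, E j k * e k t p) * e j t q
          + e j t p * (-(1 / (N : ℝ)) * ∑ k, E j k * e k t q))) t :=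
      HasDerivAt.fun_sum fun j _ => (hd j p).mul (hd j q)
    have h2 := h1.const_mul (1 / (N : ℝ))
    have hCeq : (fun s => C s p q) = fun s => (1 / (N : ℝ)) * ∑ j, e j s p * e j s q := by
      funext s
      simp only [C, Matrix.smul_apply, Matrix.sum_apply, vecMulVec_apply, smul_eq_mul]
    rw [hCeq]
    refine h2.congr_deriv (Eq.symm ?_)
    have key : (∑ j, ∑ k, E j k * (e k t p * e j t q))
        = ∑ j, ∑ k, E j k * (e j t p * e k t q) := by
      rw [Finset.sum_comm]
      refine Finset.sum_congr rfl fun j _ => Finset.sum_congr rfl fun k _ => ?_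
      rw [hEsymm j k]
    have hD : D t p q = (-(2 / (N : ℝ) ^ 2)) * ∑ j, ∑ k, E j k * (e k t p * e j t q) := by
      simp only [D, hE, Matrix.smul_apply, Matrix.sum_apply, vecMulVec_apply, smul_eq_mul]
    rw [hD]
    have expand : ∀ j, ((-(1 / (N : ℝ)) * ∑ k, E j k * e k t p) * e j t q
          + e j t p * (-(1 / (N : ℝ)) * ∑ k, E j k * e k t q))
        = -(1 / (N : ℝ)) * ((∑ k, E j k * (e k t p * e j t q))
            + (∑ k, E j k * (e j t p * e k t q))) := by
      intro j
      simp only [mul_add, Finset.mul_sum, Finset.sum_mul, ← Finset.sum_add_distrib]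
      exact Finset.sum_congr rfl fun k _ => by ring
    simp only [expand]
    rw [← Finset.mul_sum, Finset.sum_add_distrib, ← key]
    ring
  · have hvv : ∀ (u v x y : Fin d → ℝ) (W : Matrix (Fin d) (Fin d) ℝ),
        vecMulVec u v * W * vecMulVec x y = (v ⬝ᵥ (W *ᵥ x)) • vecMulVec u y := by
      intro u v x y W
      ext i j
      simp only [mul_apply, vecMulVec_apply, Matrix.smul_apply, smul_eq_mul, dotProduct, mulVec,
        Finset.mul_sum, Finset.sum_mul]
      rw [Finset.sum_comm]
      refine Finset.sum_congr rfl fun a _ => Finset.sum_congr rfl fun b _ => ?_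
      ring
    have hEdot : ∀ j k, E j k = e k t ⬝ᵥ ((Atilᵀ * Atil) *ᵥ e j t) := by
      intro j k
      rw [hE]
      rw [← mulVec_mulVec, dotProduct_mulVec, vecMul_transpose]
    have hCC : C t * (Atilᵀ * Atil) * C t
        = (1 / (N : ℝ) ^ 2) • ∑ j, ∑ k, E j k • vecMulVec (e k t) (e j t) := by
      simp only [C]
      rw [Matrix.smul_mul, Matrix.smul_mul, Matrix.mul_smul, smul_smul,
        show (1/(N:ℝ))*(1/N) = 1/(N:ℝ)^2 by ring]
      congr 1
      simp only [Matrix.sum_mul, Matrix.mul_sum, hvv]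
      refine Finset.sum_congr rfl fun a _ => Finset.sum_congr rfl fun b _ => ?_
      rw [hEdot]
    rw [hCC, smul_smul]
    simp only [D, hE]
    congr 1
    ring
end
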